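/- Let 0 ≤ γ2 ≤ γ1 ≤ π/2 with γ1 + γ2 ≤ π/2. Define x3^(1) = cos γ2 sin γ1 / (1 + cos γ1 sin γ2) and x3^(2) = cos γ2 sin γ1 / (−1 + cos γ1 sin γ2) (when the denominator is nonzero). Then −1 ≤ x3^(2) < 0 < x3^(1) < 1 whenever 0 < γ1 < π/2, and x3^(2) = −1 if and only if γ1 + γ2 = π/2. -/

import Mathlib

/-!
Both bounds become transparent after shifting by one:
`1 - x3^(1) = (1 - sin (γ1 - γ2)) / (1 + cos γ1 sin γ2)` and
`x3^(2) + 1 = (1 - sin (γ1 + γ2)) / (1 - cos γ1 sin γ2)`, where both denominators are positive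
because `|cos γ1 sin γ2| < 1` as soon as `|γ2| < π/2`. So `x3^(2) ≥ -1` since `sin ≤ 1`, with
equality exactly when `sin (γ1 + γ2) = 1`, i.e. `γ1 + γ2 = π/2`; and `x3^(1) < 1` since
`γ1 - γ2 ∈ [-π/2, π/2)`.
-/

open Real Set

namespace Real

lemma sin_lt_one_of_mem_Ico {x : ℝ} (hx : x ∈ Ico (-(π / 2)) (π / 2)) : sin x < 1 := by
  simpa using sin_lt_sin_of_lt_of_le_pi_div_two hx.1 le_rfl hx.2

lemma sin_eq_one_iff_of_mem_Icc {x : ℝ} (hx : x ∈ Icc (-(π / 2)) (π / 2)) :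
    sin x = 1 ↔ x = π / 2 :=
  ⟨fun h => injOn_sin hx ⟨by linarith [pi_pos], le_rfl⟩ (h.trans sin_pi_div_two.symm),
    fun h => h ▸ sin_pi_div_two⟩

lemma abs_sin_lt_one_of_mem_Ioo {x : ℝ} (hx : x ∈ Ioo (-(π / 2)) (π / 2)) : |sin x| < 1 := by
  have hcos : 0 < cos x := cos_pos_of_mem_Ioo hx
  rw [← sq_lt_one_iff_abs_lt_one]
  nlinarith [sin_sq_add_cos_sq x]

lemma abs_cos_mul_sin_lt_one (x : ℝ) {y : ℝ} (hy : y ∈ Ioo (-(π / 2)) (π / 2)) :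
    |cos x * sin y| < 1 := by
  rw [abs_mul]
  calc |cos x| * |sin y| ≤ |sin y| := mul_le_of_le_one_left (abs_nonneg _) (abs_cos_le_one x)
    _ < 1 := abs_sin_lt_one_of_mem_Ioo hy

end Real

/- The roots `x3^(1)` and `x3^(2)` of `u1`. -/
noncomputable def rootPlus (γ1 γ2 : ℝ) : ℝ := cos γ2 * sin γ1 / (1 + cos γ1 * sin γ2)

noncomputable def rootMinus (γ1 γ2 : ℝ) : ℝ := cos γ2 * sin γ1 / (-1 + cos γ1 * sin γ2)

lemma one_sub_rootPlus {γ1 γ2 : ℝ} (h : 1 + cos γ1 * sin γ2 ≠ 0) :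
    1 - rootPlus γ1 γ2 = (1 - sin (γ1 - γ2)) / (1 + cos γ1 * sin γ2) := by
  rw [rootPlus, sin_sub]
  field_simp
  ring

lemma rootMinus_add_one {γ1 γ2 : ℝ} (h : 1 - cos γ1 * sin γ2 ≠ 0) :
    rootMinus γ1 γ2 + 1 = (1 - sin (γ1 + γ2)) / (1 - cos γ1 * sin γ2) := by
  have h' : -1 + cos γ1 * sin γ2 ≠ 0 := fun h0 => h (by linarith)
  rw [rootMinus, sin_add]
  field_simp
  ring

section

variable {γ1 γ2 : ℝ} (hγ2 : γ2 ∈ Ioo (-(π / 2)) (π / 2))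
include hγ2

lemma one_add_cos_mul_sin_pos : 0 < 1 + cos γ1 * sin γ2 := by
  linarith [(abs_lt.1 (abs_cos_mul_sin_lt_one γ1 hγ2)).1]

lemma one_sub_cos_mul_sin_pos : 0 < 1 - cos γ1 * sin γ2 := by
  linarith [(abs_lt.1 (abs_cos_mul_sin_lt_one γ1 hγ2)).2]

lemma neg_one_le_rootMinus : -1 ≤ rootMinus γ1 γ2 := by
  have hden := one_sub_cos_mul_sin_pos (γ1 := γ1) hγ2
  have : 0 ≤ rootMinus γ1 γ2 + 1 := by
    rw [rootMinus_add_one hden.ne']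
    exact div_nonneg (sub_nonneg.2 (sin_le_one _)) hden.le
  linarith

lemma rootMinus_eq_neg_one_iff (hsum : γ1 + γ2 ∈ Icc (-(π / 2)) (π / 2)) :
    rootMinus γ1 γ2 = -1 ↔ γ1 + γ2 = π / 2 := by
  rw [← sin_eq_one_iff_of_mem_Icc hsum, ← add_eq_zero_iff_eq_neg,
    rootMinus_add_one (one_sub_cos_mul_sin_pos hγ2).ne',
    div_eq_zero_iff, or_iff_left (one_sub_cos_mul_sin_pos hγ2).ne', sub_eq_zero, eq_comm]

lemma rootPlus_lt_one (hdiff : γ1 - γ2 ∈ Ico (-(π / 2)) (π / 2)) : rootPlus γ1 γ2 < 1 := by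
  have hden := one_add_cos_mul_sin_pos (γ1 := γ1) hγ2
  have : 0 < 1 - rootPlus γ1 γ2 := by
    rw [one_sub_rootPlus hden.ne']
    exact div_pos (sub_pos.2 (sin_lt_one_of_mem_Ico hdiff)) hden
  linarith

variable (hγ1 : γ1 ∈ Ioo 0 π)
include hγ1

lemma rootPlus_pos : 0 < rootPlus γ1 γ2 :=
  div_pos (mul_pos (cos_pos_of_mem_Ioo hγ2) (sin_pos_of_pos_of_lt_pi hγ1.1 hγ1.2))
    (one_add_cos_mul_sin_pos hγ2)

lemma rootMinus_neg : rootMinus γ1 γ2 < 0 :=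
  div_neg_of_pos_of_neg (mul_pos (cos_pos_of_mem_Ioo hγ2) (sin_pos_of_pos_of_lt_pi hγ1.1 hγ1.2))
    (by linarith [one_sub_cos_mul_sin_pos (γ1 := γ1) hγ2])

end

theorem stmt2 (γ1 γ2 : ℝ)
    (h1 : 0 ≤ γ2) (h4 : γ1 + γ2 ≤ π/2) :
    let x31 := Real.cos γ2 * Real.sin γ1 / (1 + Real.cos γ1 * Real.sin γ2)
    let x32 := Real.cos γ2 * Real.sin γ1 / (-1 + Real.cos γ1 * Real.sin γ2)
    (0 < γ1 → γ1 < π/2 →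
      -1 ≤ x32 ∧ x32 < 0 ∧ 0 < x31 ∧ x31 < 1) ∧
    (0 < γ1 → γ1 < π/2 → (x32 = -1 ↔ γ1 + γ2 = π/2)) := by
  have hπ := pi_pos
  have hγ2 (hγ1 : 0 < γ1) : γ2 ∈ Ioo (-(π / 2)) (π / 2) := ⟨by linarith, by linarith⟩
  refine ⟨fun hγ1 hγ1' => ⟨neg_one_le_rootMinus (hγ2 hγ1), ?_, ?_, ?_⟩,
    fun hγ1 _ => rootMinus_eq_neg_one_iff (hγ2 hγ1) ⟨by linarith, h4⟩⟩
  · exact rootMinus_neg (hγ2 hγ1) ⟨hγ1, by linarith⟩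
  · exact rootPlus_pos (hγ2 hγ1) ⟨hγ1, by linarith⟩
  · exact rootPlus_lt_one (hγ2 hγ1) ⟨by linarith, by linarith⟩
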